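/- Let k ≥ 3C² be an integer. If the substitution σ is not unilaterally recognizable, then for each p ∈ ℕ there exist integers i_p ∈ E₁, j_p ∉ E₁, i′_p, j′_p ≥ 0, h_p, ℓ_p ≥ 1 and words α_p, γ′_p ∈ A* and γ_p ∈ A⁺ such that: u_{[i_p, i_p+ℓ_p)} = u_{[j_p, j_p+ℓ_p)}; the sequence {α_p, σ^p(u_{i′_p}), σ^p(u_{i′_p+1}), …, σ^p(u_{i′_p+k−1})} is a natural p-cutting of u_{[i_p, i_p+ℓ_p)}; and the sequence {γ_p, σ^p(u_{j′_p}), σ^p(u_{j′_p+1}), …, σ^p(u_{j′_p+h_p−1}), γ′_p} is a natural p-cutting of u_{[j_p+|α_p|, j_p+ℓ_p)}. -/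

import Mathlib

open List Filter

section Defs

variable {A : Type*}

/-- The segment `u_[i,j)` of the sequence `u`. -/
def seg (u : ℕ → A) (i j : ℕ) : List A :=
  (List.range (j - i)).map fun k => u (i + k)

/-- A substitution applied to a word, letter by letter. -/
def substWord (σ : A → List A) (w : List A) : List A := w.flatMap σ

/-- `σ^p` applied to a word. -/
def substPow (σ : A → List A) (p : ℕ) (w : List A) : List A := (substWord σ)^[p] w

/-- A substitution is primitive if some power of it sends every letter to a word
containing every letter. -/
def IsPrimitiveSubst (σ : A → List A) : Prop :=
  ∃ k : ℕ, ∀ a b : A, a ∈ substPow σ k [b]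

/-- `u` is a fixed point of `σ`: the image of every prefix of `u` is again a prefix of `u`. -/
def IsFixedPoint (σ : A → List A) (u : ℕ → A) : Prop :=
  ∀ m : ℕ, substWord σ (seg u 0 m) = seg u 0 (substWord σ (seg u 0 m)).length

/-- `u` is aperiodic under the left shift: `T^i u ≠ u` for all `i ≥ 1`. -/
def AperiodicSeq (u : ℕ → A) : Prop := ∀ i : ℕ, 1 ≤ i → (fun n => u (n + i)) ≠ u

/-- The set `E_p` of natural `p`-cutting points. -/
def cutPoints (σ : A → List A) (u : ℕ → A) (p : ℕ) : Set ℕ :=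
  { m | ∃ n : ℕ, m = (substPow σ p (seg u 0 n)).length }

/-- Unilateral recognizability of `σ` (with fixed point `u`). -/
def UnilaterallyRecognizable (σ : A → List A) (u : ℕ → A) : Prop :=
  ∃ L : ℕ, 1 ≤ L ∧ ∀ i j : ℕ,
    seg u i (i + L) = seg u j (j + L) → i ∈ cutPoints σ u 1 → j ∈ cutPoints σ u 1

/-- `L_n(u)`: the set of factors of `u` of length `n`. -/
def factors (u : ℕ → A) (n : ℕ) : Set (List A) := { w | ∃ i : ℕ, w = seg u i (i + n) }

/-- `L(u)`: the language of `u` (including the empty word). -/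
def lang (u : ℕ → A) : Set (List A) := { w | ∃ i n : ℕ, w = seg u i (i + n) }

/-- `w^n`: the concatenation of `n` copies of `w`. -/
def wpow (w : List A) (n : ℕ) : List A := (List.replicate n w).flatten

/-- A nonempty word `v` is primitive if `v = w^n` with `w` nonempty forces `w = v`. -/
def PrimitiveWord (v : List A) : Prop :=
  ∀ w : List A, w ≠ [] → ∀ n : ℕ, 1 ≤ n → v = wpow w n → w = v

/-- `g` is a gap of occurrences of `w` in `u` if every interval of length `g` in `ℤ₊`
contains an occurrence of `w`. -/
def IsGap (u : ℕ → A) (w : List A) (g : ℕ) : Prop := ∀ i : ℕ, w <:+: seg u i (i + g)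

/-- The minimal gap of a word. -/
noncomputable def minGap (u : ℕ → A) (w : List A) : ℕ := sInf { g | IsGap u w g }

/-- `g`: the maximum over `w ∈ L₂(u)` of the minimal gap of `w`. -/
noncomputable def gapConst (u : ℕ → A) : ℕ :=
  sSup { m | ∃ w ∈ factors u 2, m = minGap u w }

/-- A natural `p`-cutting `{α, σ^p(u_{i'}), …, σ^p(u_{i'+k-1}), β}` of `u_[i,i+ℓ)`. -/
def IsNaturalCutting (σ : A → List A) (u : ℕ → A) (p i ℓ : ℕ)
    (α : List A) (i' k : ℕ) (β : List A) : Prop :=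
  1 ≤ k ∧
  α <:+ substPow σ p [u (i' - 1)] ∧
  β <+: substPow σ p [u (i' + k)] ∧
  seg u i (i + ℓ) = α ++ substPow σ p (seg u i' (i' + k)) ++ β ∧
  i + α.length = (substPow σ p (seg u 0 i')).length

section Fin

variable [Fintype A] [Nonempty A] [DecidableEq A]

/-- The incidence matrix of a substitution: the `(a,b)` entry is `|σ(a)|_b`. -/
def incMatrix (σ : A → List A) : Matrix A A ℕ := Matrix.of fun a b => (σ a).count b

/-- The incidence matrix as a real matrix. -/
noncomputable def incMatrixR (σ : A → List A) : Matrix A A ℝ :=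
  Matrix.of fun a b => ((σ a).count b : ℝ)

/-- `S_p = max_{a ∈ A} |σ^p(a)|`. -/
def Sp (σ : A → List A) (p : ℕ) : ℕ :=
  Finset.univ.sup' Finset.univ_nonempty fun a => (substPow σ p [a]).length

/-- `I_p = min_{a ∈ A} |σ^p(a)|`. -/
def Ip (σ : A → List A) (p : ℕ) : ℕ :=
  Finset.univ.inf' Finset.univ_nonempty fun a => (substPow σ p [a]).length

/-- `C = ⌈(max_b β_b)/(min_b β_b)⌉` for a positive eigenvector `β`. -/
noncomputable def Cst (β : A → ℝ) : ℕ :=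
  ⌈(Finset.univ.sup' Finset.univ_nonempty β) / (Finset.univ.inf' Finset.univ_nonempty β)⌉₊

/-- `K = ⌈λ C² max{2(g+1), (#A)²}⌉`. -/
noncomputable def Kst (u : ℕ → A) (lam : ℝ) (β : A → ℝ) : ℕ :=
  ⌈lam * (Cst β : ℝ) ^ 2 *
    max (2 * ((gapConst u : ℝ) + 1)) ((Fintype.card A : ℝ) ^ 2)⌉₊

/-- The constant `p₀` of Lemma 4.2. -/
noncomputable def p0 (u : ℕ → A) (lam : ℝ) (β : A → ℝ) : ℕ :=
  (Kst u lam β) ^ 2 * ((Cst β) ^ 4 * (Kst u lam β + 1) + 2 * (Cst β) ^ 2 + 1) *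
    (∑ n ∈ Finset.Icc ((Cst β) ^ 2 * (Kst u lam β + 1) + 2)
        ((Kst u lam β + 1) * (Cst β) ^ 6 + 2 * (Cst β) ^ 4 + (Cst β) ^ 2 + 2), n) + 1

/-- The constant `L₀ = (C⁴(K+1)+2C²+1) S_{p₀}`. -/
noncomputable def L0 (σ : A → List A) (u : ℕ → A) (lam : ℝ) (β : A → ℝ) : ℕ :=
  ((Cst β) ^ 4 * (Kst u lam β + 1) + 2 * (Cst β) ^ 2 + 1) * Sp σ (p0 u lam β)

/-- The ℓ¹ norm of a vector. -/
def l1norm (f : A → ℝ) : ℝ := ∑ a, |f a|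

/-- The projective metric on positive row vectors. -/
noncomputable def projMetric (x y : A → ℝ) : ℝ :=
  Real.log ((Finset.univ.sup' Finset.univ_nonempty fun a => x a / y a) /
    (Finset.univ.inf' Finset.univ_nonempty fun a => x a / y a))

/-- The Birkhoff contraction coefficient of a matrix. -/
noncomputable def birkhoff (M : Matrix A A ℝ) : ℝ :=
  sSup { r | ∃ x y : A → ℝ, (∀ a, 0 < x a) ∧ (∀ a, 0 < y a) ∧
    LinearIndependent ℝ ![x, y] ∧
    r = projMetric (Matrix.vecMul x M) (Matrix.vecMul y M) / projMetric x y }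

end Fin

/-- Membership in the vertex set `V^*`: pairs `(xac, ybc)` of factors of `u` of length
`N + L₁ + 1` with `a ≠ b` and `|c| = L₁`. -/
def memVstar (u : ℕ → A) (N L₁ : ℕ) (p : List A × List A) : Prop :=
  ∃ (x y c : List A) (a b : A), a ≠ b ∧
    x.length = N ∧ y.length = N ∧ c.length = L₁ ∧
    p.1 = x ++ a :: c ∧ p.2 = y ++ b :: c ∧
    p.1 ∈ factors u (N + L₁ + 1) ∧ p.2 ∈ factors u (N + L₁ + 1)

/-- An edge between representatives: there is a word `w` with `s'w` a suffix of `σ(s)` and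
`t'w` a suffix of `σ(t)`. -/
def edgeRep (σ : A → List A) (p q : List A × List A) : Prop :=
  ∃ w : List A, w ≠ [] ∧ (q.1 ++ w) <:+ substWord σ p.1 ∧ (q.2 ++ w) <:+ substWord σ p.2

/-- An edge in the graph `G` between the unordered pairs represented by `p` and `q`. -/
def graphEdge (σ : A → List A) (p q : List A × List A) : Prop :=
  edgeRep σ p q ∨ edgeRep σ p q.swap ∨ edgeRep σ p.swap q ∨ edgeRep σ p.swap q.swap

/-- A representative generates a gap of natural 1-cutting points. -/
def genGapRep (σ : A → List A) (p : List A × List A) : Prop :=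
  ∃ (α β : A) (γ δ : List A),
    (σ α <:+ σ β ∧ σ α ≠ σ β) ∧
    List.Forall₂ (fun s t => σ s = σ t) γ δ ∧
    (α :: γ) <:+ substWord σ p.1 ∧ (β :: δ) <:+ substWord σ p.2

/-- The unordered pair represented by `p` generates a gap of natural 1-cutting points. -/
def genGap (σ : A → List A) (p : List A × List A) : Prop :=
  genGapRep σ p ∨ genGapRep σ p.swap

/-- The list of consecutive two-letter blocks of a word. -/
def pairsList (l : List A) : List (List A) :=
  List.zipWith (fun a b => [a, b]) l l.tail

end Defs

/-!
The eigenvector `β` gives every word the weight `∑ β`, multiplied by `λ` under `σ`; so the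
weight of a block `σ^p(a)` is `λ^p β_a`, and comparing it with the length shows that all
blocks `σ^p(a)` have lengths within a factor `C²` of each other. Hence `k ≥ 3C²` consecutive
blocks are longer than two blocks of maximal length.

Non-recognizability gives equal factors of `u` of length `(k+1) max_a |σ^p(a)|`, the first
starting at a natural 1-cutting point and the second not. The first one contains `k` full
blocks after a prefix `α`; in the second, the part after `|α|` is long enough to contain a
full block after a nonempty remainder.
-/

section Words

variable {A : Type*}

theorem seg_length (u : ℕ → A) (i j : ℕ) : (seg u i j).length = j - i := by
  simp [seg]

theorem seg_singleton (u : ℕ → A) (n : ℕ) : seg u n (n + 1) = [u n] := by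
  simp [seg, List.range_succ]

theorem seg_append_seg (u : ℕ → A) {i j l : ℕ} (hij : i ≤ j) (hjl : j ≤ l) :
    seg u i j ++ seg u j l = seg u i l := by
  apply List.ext_getElem
  · simp only [List.length_append, seg_length]; omega
  · intro n hn _
    rw [List.length_append, seg_length, seg_length] at hn
    rcases lt_or_ge n (j - i) with hn' | hn'
    · rw [List.getElem_append_left (by rwa [seg_length])]
      simp [seg]
    · rw [List.getElem_append_right (by rwa [seg_length])]
      simp only [seg, List.getElem_map, List.getElem_range, List.length_map, List.length_range]
      congr 1
      omega

theorem take_seg (u : ℕ → A) (i : ℕ) {ℓ L : ℕ} (h : ℓ ≤ L) :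
    (seg u i (i + L)).take ℓ = seg u i (i + ℓ) := by
  simp only [seg, Nat.add_sub_cancel_left]
  rw [← List.map_take, List.take_range, Nat.min_eq_left h]

theorem substPow_succ (σ : A → List A) (p : ℕ) (w : List A) :
    substPow σ (p + 1) w = substWord σ (substPow σ p w) :=
  Function.iterate_succ_apply' _ _ _

theorem substPow_nil (σ : A → List A) (p : ℕ) : substPow σ p [] = [] := by
  induction p with
  | zero => rfl
  | succ p ih => rw [substPow_succ, ih]; rfl

theorem substPow_append (σ : A → List A) (p : ℕ) (l₁ l₂ : List A) :
    substPow σ p (l₁ ++ l₂) = substPow σ p l₁ ++ substPow σ p l₂ := by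
  induction p with
  | zero => rfl
  | succ p ih => simp only [substPow_succ, ih, substWord, List.flatMap_append]

theorem length_le_length_substPow {σ : A → List A} (hσne : ∀ a, σ a ≠ []) (p : ℕ)
    (l : List A) : l.length ≤ (substPow σ p l).length := by
  induction p with
  | zero => exact le_rfl
  | succ p ih =>
    refine ih.trans ?_
    rw [substPow_succ, substWord, List.length_flatMap]
    simpa using List.card_nsmul_le_sum ((substPow σ p l).map fun a => (σ a).length) 1 (by
      simp only [List.mem_map]
      rintro _ ⟨a, -, rfl⟩
      exact List.length_pos_iff.mpr (hσne a))

end Words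

section Cutting

variable {A : Type*} {σ : A → List A} {u : ℕ → A}

/-- `cutPoints σ u p` is the range of `cutPos σ u p`. -/
def cutPos (σ : A → List A) (u : ℕ → A) (p n : ℕ) : ℕ := (substPow σ p (seg u 0 n)).length

theorem cutPos_zero (p : ℕ) : cutPos σ u p 0 = 0 := by
  simp [cutPos, seg, substPow_nil]

theorem cutPos_succ (p n : ℕ) :
    cutPos σ u p (n + 1) = cutPos σ u p n + (substPow σ p [u n]).length := by
  rw [cutPos, cutPos, ← seg_append_seg u (Nat.zero_le n) n.le_succ, seg_singleton,
    substPow_append, List.length_append]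

theorem cutPos_mono (p : ℕ) : Monotone (cutPos σ u p) :=
  monotone_nat_of_le_succ fun n => by rw [cutPos_succ]; exact Nat.le_add_right _ _

theorem substPow_seg_zero (hfix : IsFixedPoint σ u) (p m : ℕ) :
    substPow σ p (seg u 0 m) = seg u 0 (cutPos σ u p m) := by
  induction p with
  | zero => simp [cutPos, seg_length, substPow]
  | succ p ih => rw [cutPos, substPow_succ, ih]; exact hfix _

theorem substPow_seg (hfix : IsFixedPoint σ u) (p : ℕ) {n m : ℕ} (hnm : n ≤ m) :
    substPow σ p (seg u n m) = seg u (cutPos σ u p n) (cutPos σ u p m) := by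
  have h := congrArg (substPow σ p) (seg_append_seg u (Nat.zero_le n) hnm)
  rw [substPow_append, substPow_seg_zero hfix, substPow_seg_zero hfix,
    ← seg_append_seg u (Nat.zero_le _) (cutPos_mono p hnm)] at h
  exact List.append_cancel_left h

theorem substPow_singleton (hfix : IsFixedPoint σ u) (p n : ℕ) :
    substPow σ p [u n] = seg u (cutPos σ u p n) (cutPos σ u p (n + 1)) := by
  rw [← seg_singleton u n, substPow_seg hfix p n.le_succ]

variable [Fintype A] [Nonempty A]

theorem length_substPow_singleton_le_Sp (σ : A → List A) (p : ℕ) (a : A) :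
    (substPow σ p [a]).length ≤ Sp σ p :=
  Finset.le_sup' (fun a => (substPow σ p [a]).length) (Finset.mem_univ a)

theorem Ip_le_length_substPow_singleton (σ : A → List A) (p : ℕ) (a : A) :
    Ip σ p ≤ (substPow σ p [a]).length :=
  Finset.inf'_le (fun a => (substPow σ p [a]).length) (Finset.mem_univ a)

theorem one_le_Ip (hσne : ∀ a, σ a ≠ []) (p : ℕ) : 1 ≤ Ip σ p :=
  Finset.le_inf' _ _ fun a _ => length_le_length_substPow hσne p [a]

theorem cutPos_add_le (p n q : ℕ) : cutPos σ u p (n + q) ≤ cutPos σ u p n + q * Sp σ p := by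
  induction q with
  | zero => simp
  | succ q ih =>
    rw [← add_assoc, cutPos_succ, add_one_mul]
    have := length_substPow_singleton_le_Sp σ p (u (n + q))
    omega

theorem cutPos_add_ge (p n q : ℕ) : cutPos σ u p n + q * Ip σ p ≤ cutPos σ u p (n + q) := by
  induction q with
  | zero => simp
  | succ q ih =>
    rw [← add_assoc, cutPos_succ, add_one_mul]
    have := Ip_le_length_substPow_singleton σ p (u (n + q))
    omega

theorem le_cutPos (hσne : ∀ a, σ a ≠ []) (p n : ℕ) : n ≤ cutPos σ u p n := by
  have h := cutPos_add_ge (σ := σ) (u := u) p 0 n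
  rw [cutPos_zero, zero_add, zero_add] at h
  exact (Nat.le_mul_of_pos_right n (one_le_Ip hσne p)).trans h

end Cutting

section Weight

variable {A : Type*} [Fintype A] {σ : A → List A} {lam : ℝ}

theorem sum_map_eq_sum_count_mul [DecidableEq A] (β : A → ℝ) (l : List A) :
    (l.map β).sum = ∑ b, (l.count b : ℝ) * β b := by
  rw [Finset.sum_list_map_count]
  refine Finset.sum_subset (Finset.subset_univ _) (fun b _ hb => ?_) |>.trans ?_
  · simp [List.count_eq_zero_of_not_mem (by simpa using hb)]
  · simp [nsmul_eq_mul]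

theorem sum_map_substWord [DecidableEq A] {β : A → ℝ}
    (heig : (incMatrixR σ).mulVec β = lam • β) (l : List A) :
    ((substWord σ l).map β).sum = lam * (l.map β).sum := by
  have hletter (a : A) : ((σ a).map β).sum = lam * β a := by
    simpa [Matrix.mulVec, dotProduct, incMatrixR, ← sum_map_eq_sum_count_mul]
      using congrFun heig a
  induction l with
  | nil => simp [substWord]
  | cons a l ih =>
    simp only [substWord, List.flatMap_cons, List.map_append, List.sum_append] at ih ⊢
    rw [ih, hletter, List.map_cons, List.sum_cons, mul_add]

theorem sum_map_substPow [DecidableEq A] {β : A → ℝ}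
    (heig : (incMatrixR σ).mulVec β = lam • β) (p : ℕ) (l : List A) :
    ((substPow σ p l).map β).sum = lam ^ p * (l.map β).sum := by
  induction p with
  | zero => simp [substPow]
  | succ p ih => rw [substPow_succ, sum_map_substWord heig, ih]; ring

theorem inf'_mul_length_le_sum_map [Nonempty A] (β : A → ℝ) (l : List A) :
    Finset.univ.inf' Finset.univ_nonempty β * l.length ≤ (l.map β).sum := by
  simpa [mul_comm] using List.card_nsmul_le_sum (l.map β) _ (by
    simp only [List.mem_map]
    rintro _ ⟨a, -, rfl⟩
    exact Finset.inf'_le β (Finset.mem_univ a))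

theorem sum_map_le_sup'_mul_length [Nonempty A] (β : A → ℝ) (l : List A) :
    (l.map β).sum ≤ Finset.univ.sup' Finset.univ_nonempty β * l.length := by
  simpa [mul_comm] using List.sum_le_card_nsmul (l.map β) _ (by
    simp only [List.mem_map]
    rintro _ ⟨a, -, rfl⟩
    exact Finset.le_sup' β (Finset.mem_univ a))

theorem sup'_le_Cst_mul_inf' [Nonempty A] {β : A → ℝ} (hβ : ∀ a, 0 < β a) :
    Finset.univ.sup' Finset.univ_nonempty β ≤ Cst β * Finset.univ.inf' Finset.univ_nonempty β := by
  rw [← div_le_iff₀ ((Finset.lt_inf'_iff _).2 fun a _ => hβ a)]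
  exact Nat.le_ceil _

theorem length_substPow_le_Cst_sq_mul [Nonempty A] [DecidableEq A] {β : A → ℝ}
    (hβ : ∀ a, 0 < β a) (heig : (incMatrixR σ).mulVec β = lam • β) (p : ℕ) (a b : A) :
    ((substPow σ p [a]).length : ℝ) ≤ Cst β ^ 2 * (substPow σ p [b]).length := by
  set m := Finset.univ.inf' Finset.univ_nonempty β
  set M := Finset.univ.sup' Finset.univ_nonempty β
  set x : ℝ := ((substPow σ p [a]).length : ℝ)
  set y : ℝ := ((substPow σ p [b]).length : ℝ)
  have hx : m * x ≤ lam ^ p * β a := by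
    simpa [sum_map_substPow heig] using inf'_mul_length_le_sum_map β (substPow σ p [a])
  have hy : lam ^ p * β b ≤ M * y := by
    simpa [sum_map_substPow heig] using sum_map_le_sup'_mul_length β (substPow σ p [b])
  have hm : 0 < m := (Finset.lt_inf'_iff _).2 fun c _ => hβ c
  have hma : β a ≤ M := Finset.le_sup' β (Finset.mem_univ a)
  have hM : 0 < M := (hβ a).trans_le hma
  have hmb : m ≤ β b := Finset.inf'_le β (Finset.mem_univ b)
  have hMC : M ≤ Cst β * m := sup'_le_Cst_mul_inf' hβ
  have hx0 : 0 ≤ x := Nat.cast_nonneg _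
  have hy0 : 0 ≤ y := Nat.cast_nonneg _
  -- both blocks weigh `λ^p` times a value of `β`, so `m x β_b ≤ λ^p β_a β_b ≤ M y β_a`
  have key : m ^ 2 * x ≤ m ^ 2 * (Cst β ^ 2 * y) := calc
    m ^ 2 * x = m * x * m := by ring
    _ ≤ m * x * β b := mul_le_mul_of_nonneg_left hmb (mul_nonneg hm.le hx0)
    _ ≤ lam ^ p * β a * β b := mul_le_mul_of_nonneg_right hx (hβ b).le
    _ = lam ^ p * β b * β a := by ring
    _ ≤ M * y * β a := mul_le_mul_of_nonneg_right hy (hβ a).le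
    _ ≤ M * y * M := mul_le_mul_of_nonneg_left hma (mul_nonneg hM.le hy0)
    _ = M ^ 2 * y := by ring
    _ ≤ (Cst β * m) ^ 2 * y := mul_le_mul_of_nonneg_right (pow_le_pow_left₀ hM.le hMC 2) hy0
    _ = m ^ 2 * (Cst β ^ 2 * y) := by ring
  exact le_of_mul_le_mul_left key (pow_pos hm 2)

theorem Sp_le_Cst_sq_mul_Ip [Nonempty A] [DecidableEq A] {β : A → ℝ} (hβ : ∀ a, 0 < β a)
    (heig : (incMatrixR σ).mulVec β = lam • β) (p : ℕ) : (Sp σ p : ℝ) ≤ Cst β ^ 2 * Ip σ p := by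
  obtain ⟨a, -, ha⟩ := Finset.exists_mem_eq_sup' Finset.univ_nonempty
    fun a => (substPow σ p [a]).length
  obtain ⟨b, -, hb⟩ := Finset.exists_mem_eq_inf' Finset.univ_nonempty
    fun a => (substPow σ p [a]).length
  rw [Sp, Ip, ha, hb]
  exact length_substPow_le_Cst_sq_mul hβ heig p a b

end Weight

section NaturalCutting

variable {A : Type*} [Fintype A] [Nonempty A] {σ : A → List A} {u : ℕ → A}

/-- Cut `u` from position `i` to the end of the `k`-th full `p`-block after `i`. -/
theorem exists_isNaturalCutting_nil (hσne : ∀ a, σ a ≠ []) (hfix : IsFixedPoint σ u)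
    (p i : ℕ) {k : ℕ} (hk : 1 ≤ k) :
    ∃ ℓ α i', IsNaturalCutting σ u p i ℓ α i' k [] ∧
      ℓ ≤ (k + 1) * Sp σ p ∧ α.length + k * Ip σ p ≤ ℓ := by
  have hex : ∃ n, i ≤ cutPos σ u p n := ⟨i, le_cutPos hσne p i⟩
  obtain ⟨i', hi', hprev⟩ : ∃ i', i ≤ cutPos σ u p i' ∧ ∀ n < i', cutPos σ u p n < i :=
    ⟨Nat.find hex, Nat.find_spec hex, fun n hn => not_le.1 (Nat.find_min hex hn)⟩
  have hend : cutPos σ u p (i' + k) ≤ i + (k + 1) * Sp σ p := by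
    rcases Nat.eq_zero_or_pos i' with rfl | h0
    · have := cutPos_add_le (σ := σ) (u := u) p 0 k
      rw [cutPos_zero] at hi' this
      nlinarith
    · have := cutPos_add_le (σ := σ) (u := u) p (i' - 1) (k + 1)
      rw [show i' - 1 + (k + 1) = i' + k by omega] at this
      nlinarith [hprev (i' - 1) (by omega)]
  have hblocks := cutPos_add_ge (σ := σ) (u := u) p i' k
  have hmono : cutPos σ u p i' ≤ cutPos σ u p (i' + k) := cutPos_mono p (Nat.le_add_right _ _)
  refine ⟨cutPos σ u p (i' + k) - i, seg u i (cutPos σ u p i'), i',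
    ⟨hk, ?_, List.nil_prefix, ?_, ?_⟩, ?_, ?_⟩
  · rcases Nat.eq_zero_or_pos i' with rfl | h0
    · simp [cutPos_zero, seg]
    · rw [substPow_singleton hfix, Nat.sub_add_cancel h0]
      exact ⟨_, seg_append_seg u (hprev (i' - 1) (by omega)).le hi'⟩
  · rw [List.append_nil, Nat.add_sub_cancel' (hi'.trans hmono),
      substPow_seg hfix p (Nat.le_add_right _ _), seg_append_seg u hi' hmono]
  · rw [seg_length]; exact Nat.add_sub_cancel' hi'
  · omega
  · rw [seg_length]; omega

theorem exists_isNaturalCutting_of_two_mul_Sp_le (hσne : ∀ a, σ a ≠ [])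
    (hfix : IsFixedPoint σ u) (p m : ℕ) {ℓ : ℕ} (hℓ : 2 * Sp σ p ≤ ℓ) :
    ∃ j' n γ γ', IsNaturalCutting σ u p m ℓ γ j' n γ' ∧ γ ≠ [] := by
  have hex : ∃ n, m < cutPos σ u p n := ⟨m + 1, le_cutPos hσne p (m + 1)⟩
  obtain ⟨j', hj', hprev⟩ : ∃ j', m < cutPos σ u p j' ∧ ∀ n < j', cutPos σ u p n ≤ m :=
    ⟨Nat.find hex, Nat.find_spec hex, fun n hn => not_lt.1 (Nat.find_min hex hn)⟩
  have hj'pos : 0 < j' := Nat.pos_of_ne_zero fun h0 => by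
    rw [h0, cutPos_zero] at hj'; omega
  have hnext : cutPos σ u p (j' + 1) ≤ m + ℓ := by
    have := cutPos_add_le (σ := σ) (u := u) p (j' - 1) 2
    rw [show j' - 1 + 2 = j' + 1 by omega] at this
    have := hprev (j' - 1) (by omega)
    omega
  have hex' : ∃ n, m + ℓ < cutPos σ u p (j' + n + 1) :=
    ⟨m + ℓ, (le_cutPos hσne p _).trans_lt' (by omega)⟩
  obtain ⟨n, hn, hlast⟩ : ∃ n, m + ℓ < cutPos σ u p (j' + n + 1) ∧
      ∀ q < n, cutPos σ u p (j' + q + 1) ≤ m + ℓ :=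
    ⟨Nat.find hex', Nat.find_spec hex', fun q hq => not_lt.1 (Nat.find_min hex' hq)⟩
  have hn1 : 1 ≤ n := Nat.pos_of_ne_zero fun h0 => by
    rw [h0, add_zero] at hn; omega
  replace hlast : cutPos σ u p (j' + n) ≤ m + ℓ := by
    simpa [show j' + (n - 1) + 1 = j' + n by omega] using hlast (n - 1) (by omega)
  have hmid : cutPos σ u p j' ≤ cutPos σ u p (j' + n) := cutPos_mono p (Nat.le_add_right _ _)
  refine ⟨j', n, seg u m (cutPos σ u p j'), seg u (cutPos σ u p (j' + n)) (m + ℓ),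
    ⟨hn1, ?_, ?_, ?_, ?_⟩, ?_⟩
  · rw [substPow_singleton hfix, Nat.sub_add_cancel hj'pos]
    exact ⟨_, seg_append_seg u (hprev (j' - 1) (by omega)) hj'.le⟩
  · rw [substPow_singleton hfix]
    exact ⟨_, seg_append_seg u hlast hn.le⟩
  · rw [substPow_seg hfix p (Nat.le_add_right _ _), seg_append_seg u hj'.le hmid,
      seg_append_seg u (hj'.le.trans hmid) hlast]
  · rw [seg_length]; exact Nat.add_sub_cancel' hj'.le
  · rw [← List.length_pos_iff, seg_length]; omega

end NaturalCutting

theorem exists_seg_eq_of_not_unilaterallyRecognizable {A : Type*} {σ : A → List A}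
    {u : ℕ → A} (hrec : ¬ UnilaterallyRecognizable σ u) {L : ℕ} (hL : 1 ≤ L) :
    ∃ i j, seg u i (i + L) = seg u j (j + L) ∧ i ∈ cutPoints σ u 1 ∧ j ∉ cutPoints σ u 1 := by
  by_contra! h
  exact hrec ⟨L, hL, h⟩

theorem stmt_7_general (A : Type*) [Fintype A] [DecidableEq A] [Nonempty A]
    (σ : A → List A) (hσne : ∀ a, σ a ≠ [])
    (u : ℕ → A) (hfix : IsFixedPoint σ u)
    (lam : ℝ) (β : A → ℝ) (hβ : ∀ a, 0 < β a)
    (heig : (incMatrixR σ).mulVec β = lam • β)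
    (k : ℕ) (hk : 3 * (Cst β : ℝ) ^ 2 ≤ (k : ℝ))
    (hrec : ¬ UnilaterallyRecognizable σ u) :
    ∀ p : ℕ, 1 ≤ p →
      ∃ (i j i' j' h ℓ : ℕ) (α γ' γ : List A),
        i ∈ cutPoints σ u 1 ∧ j ∉ cutPoints σ u 1 ∧ 1 ≤ h ∧ 1 ≤ ℓ ∧ γ ≠ [] ∧
        seg u i (i + ℓ) = seg u j (j + ℓ) ∧
        IsNaturalCutting σ u p i ℓ α i' k [] ∧
        IsNaturalCutting σ u p (j + α.length) (ℓ - α.length) γ j' h γ' := by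
  intro p _
  have hI := one_le_Ip hσne p
  have hIS : Ip σ p ≤ Sp σ p := (Ip_le_length_substPow_singleton σ p (Classical.arbitrary A)).trans
    (length_substPow_singleton_le_Sp σ p _)
  have hkI : 2 * Sp σ p ≤ k * Ip σ p := by
    have := Sp_le_Cst_sq_mul_Ip hβ heig p
    exact_mod_cast (by nlinarith : (2 * Sp σ p : ℝ) ≤ k * Ip σ p)
  have hk1 : 1 ≤ k := Nat.pos_of_ne_zero fun hk0 => by rw [hk0, zero_mul] at hkI; omega
  obtain ⟨i, j, hseg, hi, hj⟩ :=
    exists_seg_eq_of_not_unilaterallyRecognizable hrec (L := (k + 1) * Sp σ p + 1) le_add_self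
  obtain ⟨ℓ, α, i', hcut, hℓ, hαℓ⟩ := exists_isNaturalCutting_nil hσne hfix p i hk1
  obtain ⟨j', h, γ, γ', hcut', hγ⟩ :=
    exists_isNaturalCutting_of_two_mul_Sp_le hσne hfix p (j + α.length) (ℓ := ℓ - α.length)
      (by omega)
  have hℓpos : 1 ≤ ℓ := (Nat.mul_le_mul hk1 hI).trans (by omega)
  refine ⟨i, j, i', j', h, ℓ, α, γ', γ, hi, hj, hcut'.1, hℓpos, hγ, ?_, hcut, hcut'⟩
  have hℓL : ℓ ≤ (k + 1) * Sp σ p + 1 := by omega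
  rw [← take_seg u i hℓL, ← take_seg u j hℓL, hseg]

/-- Lemma 3.2: if `k ≥ 3C²` and `σ` is not unilaterally recognizable, then for each `p`
there exist `i_p ∈ E₁`, `j_p ∉ E₁`, indices `i'_p, j'_p ≥ 0`, `h_p, ℓ_p ≥ 1` and words
`α_p, γ'_p ∈ A*`, `γ_p ∈ A⁺` with `u_[i_p,i_p+ℓ_p) = u_[j_p,j_p+ℓ_p)`,
`{α_p, σ^p(u_{i'_p}), …, σ^p(u_{i'_p+k-1})}` a natural `p`-cutting of `u_[i_p,i_p+ℓ_p)`,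
and `{γ_p, σ^p(u_{j'_p}), …, σ^p(u_{j'_p+h_p-1}), γ'_p}` a natural `p`-cutting of
`u_[j_p+|α_p|, j_p+ℓ_p)`. -/
theorem stmt_7 (A : Type*) [Fintype A] [DecidableEq A] [Nonempty A]
    (h2 : 2 ≤ Fintype.card A)
    (σ : A → List A) (hσne : ∀ a, σ a ≠ [])
    (hprim : IsPrimitiveSubst σ)
    (u : ℕ → A) (hfix : IsFixedPoint σ u) (hap : AperiodicSeq u)
    (lam : ℝ) (β : A → ℝ) (hβ : ∀ a, 0 < β a)
    (heig : (incMatrixR σ).mulVec β = lam • β)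
    (k : ℕ) (hk : 3 * (Cst β : ℝ) ^ 2 ≤ (k : ℝ))
    (hrec : ¬ UnilaterallyRecognizable σ u) :
    ∀ p : ℕ, 1 ≤ p →
      ∃ (i j i' j' h ℓ : ℕ) (α γ' γ : List A),
        i ∈ cutPoints σ u 1 ∧ j ∉ cutPoints σ u 1 ∧ 1 ≤ h ∧ 1 ≤ ℓ ∧ γ ≠ [] ∧
        seg u i (i + ℓ) = seg u j (j + ℓ) ∧
        IsNaturalCutting σ u p i ℓ α i' k [] ∧
        IsNaturalCutting σ u p (j + α.length) (ℓ - α.length) γ j' h γ' :=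
  stmt_7_general A σ hσne u hfix lam β hβ heig k hk hrec
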